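/- Let k ∈ ℝ, let σ be a finite (nonnegative) measure on ℝ³ whose support is contained in a compact set K ⊆ ℝ³, and let J : ℝ³ → ℂ³ be a bounded measurable vector density. Define the vector potential A(x) = ∫ exp(−i·k·‖x−y‖)/(4π‖x−y‖)·J(y) dσ(y) for x ∉ K. Then A is differentiable on ℝ³ \ K and its curl is obtained by differentiating under the integral sign: curl A (x) = ∫ ∇_x G_k(x,y) × J(y) dσ(y) for every x ∉ K, where ∇_x G_k(x,y) = (exp(−i·k·r)/(4πr))·(1/r + i·k)·(y − x)/r with r = ‖x−y‖. -/

import Mathlib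

/-!
Write `G_k(x, y) = g(‖x - y‖)` with `g(r) = e^{-ikr} / (4πr)`. Then `∇ₓG_k(x, y)` is
`g'(r) (x - y) / r`, of norm at most `(4πε)⁻¹ (|k| + ε⁻¹)` as soon as `‖x - y‖ ≥ ε`.
Around a point `x ∉ K` there is a ball staying at distance `ε > 0` from `K ⊇ supp σ`, so on
that ball the integrand `G_k(x, y) J(y)` and its `x`-derivative are dominated by a constant,
which is integrable because `σ` is finite. Differentiation under the integral sign then gives every
partial derivative of `A`, and the curl is assembled from them componentwise.
-/

open Complex MeasureTheory Filter Metric Topology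

/-- The radial profile `g` of the Green's function, `G_k(x, y) = g ‖x - y‖`. -/
noncomputable def helmholtzRadial (k r : ℝ) : ℂ :=
  Complex.exp (-Complex.I * (k : ℂ) * (r : ℂ)) / ((4 * Real.pi * r : ℝ) : ℂ)

@[fun_prop]
theorem measurable_helmholtzRadial (k : ℝ) : Measurable (helmholtzRadial k) := by
  unfold helmholtzRadial
  fun_prop

theorem norm_helmholtzRadial (k : ℝ) {r : ℝ} (hr : 0 < r) :
    ‖helmholtzRadial k r‖ = (4 * Real.pi * r)⁻¹ := by
  have hexp : ‖exp (-I * k * r)‖ = 1 := by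
    rw [show -I * k * r = I * ((-(k * r) : ℝ) : ℂ) by push_cast; ring, norm_exp_I_mul_ofReal]
  rw [helmholtzRadial, norm_div, norm_real, Real.norm_of_nonneg (by positivity), hexp, one_div]

theorem hasDerivAt_helmholtzRadial (k : ℝ) {r : ℝ} (hr : r ≠ 0) :
    HasDerivAt (helmholtzRadial k) (helmholtzRadial k r * (-(I * k) - (r : ℂ)⁻¹)) r := by
  have hnum := (((hasDerivAt_id r).ofReal_comp).const_mul (-I * k)).cexp
  have hden := ((hasDerivAt_id r).const_mul (4 * Real.pi)).ofReal_comp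
  have hden0 : ((4 * Real.pi * r : ℝ) : ℂ) ≠ 0 := by
    exact_mod_cast mul_ne_zero (by positivity) hr
  refine (hnum.div hden hden0).congr_deriv ?_
  have hr' : (r : ℂ) ≠ 0 := by exact_mod_cast hr
  unfold helmholtzRadial
  simp only [id, ofReal_one]
  push_cast
  field_simp

section Gradient

variable {F : Type*} [NormedAddCommGroup F] [InnerProductSpace ℝ F]

theorem hasFDerivAt_norm_of_ne_zero {v : F} (hv : v ≠ 0) :
    HasFDerivAt (‖·‖) (‖v‖⁻¹ • innerSL ℝ v) v := by
  have h := (hasStrictFDerivAt_norm_sq v).hasFDerivAt.sqrt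
    (pow_ne_zero 2 (norm_ne_zero_iff.mpr hv))
  simp only [Real.sqrt_sq (norm_nonneg _)] at h
  convert h using 1
  ext w
  simp only [smul_apply, coe_innerSL_apply, smul_eq_mul, one_div, mul_inv_rev,
    two_smul, smul_add, add_apply]
  ring

theorem HasDerivAt.hasFDerivAt_comp_norm_sub {g : ℝ → ℂ} {g' : ℂ} {x y : F} (hxy : x ≠ y)
    (hg : HasDerivAt g g' ‖x - y‖) :
    HasFDerivAt (fun z => g ‖z - y‖)
      ((g' * (‖x - y‖ : ℂ)⁻¹) • (ofRealCLM ∘L innerSL ℝ (x - y))) x := by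
  have hnorm := (hasFDerivAt_norm_of_ne_zero (sub_ne_zero.mpr hxy)).comp x
    ((hasFDerivAt_id x).sub_const y)
  refine (hg.hasFDerivAt.comp x hnorm).congr_fderiv ?_
  ext w
  simp only [map_sub, ContinuousLinearMap.comp_id, ContinuousLinearMap.comp_smulₛₗ, map_inv₀,
    Real.ringHom_apply, ContinuousLinearMap.comp_sub, smul_apply,
    sub_apply, ContinuousLinearMap.comp_apply, coe_innerSL_apply,
    ContinuousLinearMap.toSpanSingleton_apply, real_smul, ofReal_inv, ofRealCLM_apply, smul_eq_mul]
  ring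

/-- `∇ₓG_k(x, y)`, as a linear form, in terms of `v = x - y`. -/
noncomputable def helmholtzFDeriv (k : ℝ) (v : F) : F →L[ℝ] ℂ :=
  (helmholtzRadial k ‖v‖ * (-(I * k) - (‖v‖ : ℂ)⁻¹) * (‖v‖ : ℂ)⁻¹) •
    (ofRealCLM ∘L innerSL ℝ v)

theorem hasFDerivAt_helmholtzRadial_norm_sub (k : ℝ) {x y : F} (hxy : x ≠ y) :
    HasFDerivAt (fun z => helmholtzRadial k ‖z - y‖) (helmholtzFDeriv k (x - y)) x :=
  HasDerivAt.hasFDerivAt_comp_norm_sub hxy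
    (hasDerivAt_helmholtzRadial k (norm_ne_zero_iff.mpr (sub_ne_zero.mpr hxy)))

theorem norm_helmholtzFDeriv_le (k : ℝ) {ε : ℝ} (hε : 0 < ε) {v : F} (hv : ε ≤ ‖v‖) :
    ‖helmholtzFDeriv k v‖ ≤ (4 * Real.pi * ε)⁻¹ * (|k| + ε⁻¹) := by
  have hv0 : 0 < ‖v‖ := hε.trans_le hv
  have hinner : ‖ofRealCLM ∘L innerSL ℝ v‖ ≤ ‖v‖ :=
    ContinuousLinearMap.opNorm_le_bound _ (norm_nonneg v) fun w => by
      simpa using abs_real_inner_le_norm v w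
  have hfactor : ‖-(I * k) - (‖v‖ : ℂ)⁻¹‖ ≤ |k| + ‖v‖⁻¹ := by
    refine (norm_sub_le _ _).trans_eq ?_
    simp
  calc ‖helmholtzFDeriv k v‖
      ≤ (4 * Real.pi * ‖v‖)⁻¹ * (|k| + ‖v‖⁻¹) * ‖v‖⁻¹ * ‖v‖ := by
        refine (ContinuousLinearMap.opNorm_smul_le _ _).trans ?_
        rw [norm_mul, norm_mul, norm_helmholtzRadial k hv0, norm_inv, norm_real,
          Real.norm_of_nonneg (norm_nonneg v)]
        gcongr
    _ = (4 * Real.pi * ‖v‖)⁻¹ * (|k| + ‖v‖⁻¹) := by field_simp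
    _ ≤ (4 * Real.pi * ε)⁻¹ * (|k| + ε⁻¹) := by gcongr

theorem helmholtzFDeriv_sub_apply_single {n : ℕ} (k : ℝ) (x y : EuclideanSpace ℝ (Fin n))
    (i : Fin n) :
    helmholtzFDeriv k (x - y) (EuclideanSpace.single i 1) =
      helmholtzRadial k ‖x - y‖ * (((1 / ‖x - y‖ : ℝ) : ℂ) + I * k) *
        (((y - x) i / ‖x - y‖ : ℝ) : ℂ) := by
  simp only [helmholtzFDeriv, smul_apply, ContinuousLinearMap.comp_apply,
    coe_innerSL_apply, EuclideanSpace.inner_single_right, Real.ringHom_apply, one_mul,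
    ofRealCLM_apply, smul_eq_mul, one_div, ofReal_inv, PiLp.sub_apply, ofReal_div, ofReal_sub]
  ring

end Gradient

theorem hasFDerivAt_integral_mul_of_bounded {E α : Type*} [NormedAddCommGroup E]
    [NormedSpace ℝ E] [MeasurableSpace α] {σ : Measure α} [IsFiniteMeasure σ]
    {φ : E → α → ℂ} {φ' : E → α → E →L[ℝ] ℂ} {j : α → ℂ} {s : Set E} {x₀ : E} {B₀ B₁ C : ℝ}
    (hs : s ∈ 𝓝 x₀)
    (hφ_meas : ∀ x, AEStronglyMeasurable (φ x) σ)
    (hφ'_meas : AEStronglyMeasurable (φ' x₀) σ)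
    (hj_meas : AEStronglyMeasurable j σ) (hj : ∀ y, ‖j y‖ ≤ C)
    (hφ : ∀ᵐ y ∂σ, ‖φ x₀ y‖ ≤ B₀) (hφ' : ∀ᵐ y ∂σ, ∀ x ∈ s, ‖φ' x y‖ ≤ B₁)
    (hdiff : ∀ᵐ y ∂σ, ∀ x ∈ s, HasFDerivAt (φ · y) (φ' x y) x) :
    HasFDerivAt (fun x => ∫ y, φ x y * j y ∂σ) (∫ y, j y • φ' x₀ y ∂σ) x₀ := by
  refine hasFDerivAt_integral_of_dominated_of_fderiv_le (bound := fun _ => C * B₁) hs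
    (.of_forall fun x => (hφ_meas x).mul hj_meas) ?_ (hj_meas.smul hφ'_meas) ?_
    (integrable_const _) (hdiff.mono fun y hy x hx => (hy x hx).mul_const (j y))
  · refine .of_bound ((hφ_meas x₀).mul hj_meas) (B₀ * C) (hφ.mono fun y hy => ?_)
    rw [Pi.mul_apply, norm_mul]
    exact mul_le_mul hy (hj y) (norm_nonneg _) ((norm_nonneg _).trans hy)
  · refine hφ'.mono fun y hy x hx => (ContinuousLinearMap.opNorm_smul_le _ _).trans ?_
    exact mul_le_mul (hj y) (hy x hx) (norm_nonneg _) ((norm_nonneg _).trans (hj y))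

theorem exists_pos_le_dist_of_isClosed {X : Type*} [PseudoMetricSpace X] {K : Set X}
    (hK : IsClosed K) {x₀ : X} (hx₀ : x₀ ∉ K) :
    ∃ ε > 0, ∀ x ∈ ball x₀ ε, ∀ y ∈ K, ε ≤ dist x y := by
  obtain ⟨δ, hδ, hball⟩ := Metric.isOpen_iff.mp hK.isOpen_compl x₀ hx₀
  refine ⟨δ / 2, by positivity, fun x hx y hy => ?_⟩
  have hδy : δ ≤ dist x₀ y := not_lt.mp fun h => hball (mem_ball'.mpr h) hy
  linarith [dist_triangle x₀ x y, mem_ball'.mp hx]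

theorem exists_pos_ae_le_norm_sub {E : Type*} [SeminormedAddCommGroup E] [MeasurableSpace E]
    {σ : Measure E} {K : Set E} (hK : IsClosed K) (hsupp : σ Kᶜ = 0) {x₀ : E} (hx₀ : x₀ ∉ K) :
    ∃ ε > 0, ∀ᵐ y ∂σ, ∀ x ∈ ball x₀ ε, ε ≤ ‖x - y‖ := by
  obtain ⟨ε, hε, hsep⟩ := exists_pos_le_dist_of_isClosed hK hx₀
  refine ⟨ε, hε, (ae_iff.mpr hsupp : ∀ᵐ y ∂σ, y ∈ K).mono fun y hy x hx => ?_⟩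
  rw [← dist_eq_norm]
  exact hsep x hx y hy

section Potential

variable {F : Type*} [NormedAddCommGroup F] [InnerProductSpace ℝ F] [FiniteDimensional ℝ F]
  [MeasurableSpace F] [BorelSpace F] {σ : Measure F} [IsFiniteMeasure σ] {K : Set F}
  {j : F → ℂ} {C : ℝ} {x₀ : F}

theorem stronglyMeasurable_helmholtzFDeriv (k : ℝ) :
    StronglyMeasurable (helmholtzFDeriv k : F → F →L[ℝ] ℂ) := by
  have hc : Measurable fun v : F =>
      helmholtzRadial k ‖v‖ * (-(I * k) - (‖v‖ : ℂ)⁻¹) * (‖v‖ : ℂ)⁻¹ := by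
    fun_prop
  have hL : Continuous fun v : F => ofRealCLM ∘L innerSL ℝ v := by fun_prop
  exact hc.stronglyMeasurable.smul hL.stronglyMeasurable

theorem integrable_smul_helmholtzFDeriv (k : ℝ) (hK : IsClosed K) (hsupp : σ Kᶜ = 0)
    (hj_meas : Measurable j) (hj : ∀ y, ‖j y‖ ≤ C) (hx₀ : x₀ ∉ K) :
    Integrable (fun y => j y • helmholtzFDeriv k (x₀ - y)) σ := by
  obtain ⟨ε, hε, hsep⟩ := exists_pos_ae_le_norm_sub hK hsupp hx₀
  have hmeas := (stronglyMeasurable_helmholtzFDeriv k).comp_measurable (measurable_const_sub x₀)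
  refine .of_bound (hj_meas.aestronglyMeasurable.smul hmeas.aestronglyMeasurable)
    (C * ((4 * Real.pi * ε)⁻¹ * (|k| + ε⁻¹))) (hsep.mono fun y hy => ?_)
  refine (ContinuousLinearMap.opNorm_smul_le _ _).trans ?_
  exact mul_le_mul (hj y) (norm_helmholtzFDeriv_le k hε (hy x₀ (mem_ball_self hε)))
    (norm_nonneg _) ((norm_nonneg _).trans (hj y))

theorem hasFDerivAt_integral_helmholtzRadial_mul (k : ℝ) (hK : IsClosed K) (hsupp : σ Kᶜ = 0)
    (hj_meas : Measurable j) (hj : ∀ y, ‖j y‖ ≤ C) (hx₀ : x₀ ∉ K) :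
    HasFDerivAt (fun x => ∫ y, helmholtzRadial k ‖x - y‖ * j y ∂σ)
      (∫ y, j y • helmholtzFDeriv k (x₀ - y) ∂σ) x₀ := by
  obtain ⟨ε, hε, hsep⟩ := exists_pos_ae_le_norm_sub hK hsupp hx₀
  have hmeas := (stronglyMeasurable_helmholtzFDeriv k).comp_measurable (measurable_const_sub x₀)
  refine hasFDerivAt_integral_mul_of_bounded (φ' := fun x y => helmholtzFDeriv k (x - y))
    (ball_mem_nhds x₀ hε)
    (fun x => (by fun_prop : Measurable fun y => helmholtzRadial k ‖x - y‖).aestronglyMeasurable)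
    hmeas.aestronglyMeasurable hj_meas.aestronglyMeasurable hj (B₀ := (4 * Real.pi * ε)⁻¹)
    (B₁ := (4 * Real.pi * ε)⁻¹ * (|k| + ε⁻¹)) ?_ ?_ ?_
  · refine hsep.mono fun y hy => ?_
    have hr := hy x₀ (mem_ball_self hε)
    rw [norm_helmholtzRadial k (hε.trans_le hr)]
    gcongr
  · exact hsep.mono fun y hy x hx => norm_helmholtzFDeriv_le k hε (hy x hx)
  · refine hsep.mono fun y hy x hx => hasFDerivAt_helmholtzRadial_norm_sub k ?_
    rintro rfl
    simpa [hε.not_ge] using hy x hx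

end Potential

section Curl

local notation "ℝ³" => EuclideanSpace ℝ (Fin 3)

noncomputable def curl (A : ℝ³ → Fin 3 → ℂ) (x : ℝ³) : Fin 3 → ℂ :=
  ![fderiv ℝ (fun z => A z 2) x (EuclideanSpace.single 1 1) -
      fderiv ℝ (fun z => A z 1) x (EuclideanSpace.single 2 1),
    fderiv ℝ (fun z => A z 0) x (EuclideanSpace.single 2 1) -
      fderiv ℝ (fun z => A z 2) x (EuclideanSpace.single 0 1),
    fderiv ℝ (fun z => A z 1) x (EuclideanSpace.single 0 1) -
      fderiv ℝ (fun z => A z 0) x (EuclideanSpace.single 1 1)]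

theorem curl_eq_integral_cross {α : Type*} [MeasurableSpace α] {σ : Measure α}
    {A : ℝ³ → Fin 3 → ℂ} {x : ℝ³} {Φ : α → ℝ³ →L[ℝ] ℂ} {J : α → Fin 3 → ℂ}
    (hint : ∀ m, Integrable (fun y => J y m • Φ y) σ)
    (hA : ∀ m, HasFDerivAt (fun z => A z m) (∫ y, J y m • Φ y ∂σ) x) :
    curl A x =
      fun m => ∫ y, crossProduct (fun i => Φ y (EuclideanSpace.single i 1)) (J y) m ∂σ := by
  have hint' : ∀ m i, Integrable (fun y => Φ y (EuclideanSpace.single i 1) * J y m) σ :=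
    fun m i => ((hint m).apply_continuousLinearMap (EuclideanSpace.single i 1)).congr
      (.of_forall fun y => mul_comm _ _)
  have hpartial : ∀ m i, fderiv ℝ (fun z => A z m) x (EuclideanSpace.single i 1) =
      ∫ y, Φ y (EuclideanSpace.single i 1) * J y m ∂σ := by
    intro m i
    rw [(hA m).fderiv, ContinuousLinearMap.integral_apply (hint m)]
    simp [mul_comm]
  funext m
  fin_cases m <;>
  · simp only [curl, hpartial, ← integral_sub (hint' _ _) (hint' _ _)]
    simp [cross_apply]

end Curl

/-- The Helmholtz vector potential `A(x) = ∫ G_k(x,y) J(y) dσ(y)` of a bounded measurable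
vector density `J` against a finite measure `σ` supported in a compact set `K` is
differentiable off `K`, and its curl is obtained by differentiating under the integral
sign: `curl A (x) = ∫ ∇ₓG_k(x,y) × J(y) dσ(y)` for all `x ∉ K`, where
`∇ₓG_k(x,y) = (exp(−ikr)/(4πr))·(1/r + ik)·(y−x)/r`, `r = ‖x−y‖`. -/
theorem curl_vector_potential (k : ℝ)
    (σ : Measure (EuclideanSpace ℝ (Fin 3))) [IsFiniteMeasure σ]
    (K : Set (EuclideanSpace ℝ (Fin 3))) (hK : IsCompact K) (hsupp : σ Kᶜ = 0)
    (J : EuclideanSpace ℝ (Fin 3) → Fin 3 → ℂ) (hJmeas : Measurable J)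
    (hJbdd : ∃ C : ℝ, ∀ y m, ‖J y m‖ ≤ C)
    (G : EuclideanSpace ℝ (Fin 3) → EuclideanSpace ℝ (Fin 3) → ℂ)
    (hG : ∀ x y, G x y = Complex.exp (-Complex.I * (k : ℂ) * (‖x - y‖ : ℂ)) /
        ((4 * Real.pi * ‖x - y‖ : ℝ) : ℂ))
    (A : EuclideanSpace ℝ (Fin 3) → Fin 3 → ℂ)
    (hA : ∀ x, x ∉ K → ∀ m, A x m = ∫ y, G x y * J y m ∂σ)
    (gradG : EuclideanSpace ℝ (Fin 3) → EuclideanSpace ℝ (Fin 3) → Fin 3 → ℂ)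
    (hgradG : ∀ x y m, gradG x y m =
      G x y * (((1 / ‖x - y‖ : ℝ) : ℂ) + Complex.I * (k : ℂ)) *
        (((y - x) m / ‖x - y‖ : ℝ) : ℂ)) :
    DifferentiableOn ℝ A Kᶜ ∧
    ∀ x ∉ K,
      (![fderiv ℝ (fun z => A z 2) x (EuclideanSpace.single 1 1) -
           fderiv ℝ (fun z => A z 1) x (EuclideanSpace.single 2 1),
         fderiv ℝ (fun z => A z 0) x (EuclideanSpace.single 2 1) -
           fderiv ℝ (fun z => A z 2) x (EuclideanSpace.single 0 1),
         fderiv ℝ (fun z => A z 1) x (EuclideanSpace.single 0 1) -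
           fderiv ℝ (fun z => A z 0) x (EuclideanSpace.single 1 1)]) =
        (fun m : Fin 3 => ∫ y, crossProduct (gradG x y) (J y) m ∂σ) := by
  obtain ⟨C, hC⟩ := hJbdd
  have hJm (m : Fin 3) : Measurable (J · m) := (measurable_pi_apply m).comp hJmeas
  have hderiv : ∀ x ∉ K, ∀ m, HasFDerivAt (fun z => A z m)
      (∫ y, J y m • helmholtzFDeriv k (x - y) ∂σ) x := by
    intro x hx m
    have hAx : (fun z => ∫ y, helmholtzRadial k ‖z - y‖ * J y m ∂σ) =ᶠ[𝓝 x] (A · m) :=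
      eventually_of_mem (hK.isClosed.isOpen_compl.mem_nhds hx) fun z hz => by
        simp only [hA z hz m, hG, helmholtzRadial]
    exact (hasFDerivAt_integral_helmholtzRadial_mul k hK.isClosed hsupp (hJm m)
      (fun y => hC y m) hx).congr_of_eventuallyEq hAx.symm
  refine ⟨fun x hx => (differentiableAt_pi.mpr fun m =>
    (hderiv x hx m).differentiableAt).differentiableWithinAt, fun x hx => ?_⟩
  have hgrad : ∀ y,
      gradG x y = fun i => helmholtzFDeriv k (x - y) (EuclideanSpace.single i 1) :=
    fun y => funext fun i => by rw [hgradG, hG, helmholtzFDeriv_sub_apply_single]; rfl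
  simp only [hgrad]
  exact curl_eq_integral_cross (fun m => integrable_smul_helmholtzFDeriv k hK.isClosed hsupp
    (hJm m) (fun y => hC y m) hx) (hderiv x hx)
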